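/- For all n ≥ 0 and k ∈ ℤ, the modified Stirling cycle number satisfies [n choose k]* = Σ_{j=1}^{k} (-1)^{j-1} ω_j [n choose k-j], where ω_j = [0 choose j]* · (-1)^{j-1} are determined by the array a_{0,m} = 1/(m+1), a_{n+1,m} = (a_{n,m} - a_{n,m+1})/(m+1), ω_n = a_{n,0}. -/

import Mathlib

/-!
Both sides satisfy the Stirling cycle recurrence in `n`: the right-hand side because each
`[n choose k - j]` does, the top term `j = k` contributing `[n choose -1] = 0`. So it suffices to
compare row `n = 0`, where the right-hand side reduces to its term `j = k`, i.e.
`(-1)^(k-1) ω_k`. For the left-hand side, the recurrence at `n = m + 1` gives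
`(m+1)[m+1 choose K]* = [m+2 choose K]* - [m+1 choose K-1]*`, which is exactly the recursion
defining `aArr`; starting from the diagonal `[m+1 choose m+1]* = 1 - a_{0,m}` it yields
`[m+1 choose m+d+2]* = (-1)^d a_{d+1,m}`, and `m = 0` together with `[1 choose j+2]* = [0 choose j+1]*`
gives `[0 choose j+1]* = (-1)^j ω_{j+1}`.
-/

/-- The array a_{n,m}: a_{0,m} = 1/(m+1), a_{n+1,m} = (a_{n,m} - a_{n,m+1})/(m+1). -/
def aArr : ℕ → ℕ → ℚ
  | 0, m => 1 / ((m : ℚ) + 1)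
  | n + 1, m => (aArr n m - aArr n (m + 1)) / ((m : ℚ) + 1)

/-- ω_n = a_{n,0}. -/
def omegaSeq (n : ℕ) : ℚ := aArr n 0

/-- Stirling cycle numbers. -/
def stirCycle : ℕ → ℤ → ℚ
  | 0, k => if k = 0 then 1 else 0
  | n+1, k => stirCycle n (k - 1) + (n : ℚ) * stirCycle n k

def StirlingCycleRec (f : ℕ → ℤ → ℚ) : Prop :=
  ∀ (n : ℕ) (k : ℤ), f (n + 1) k = f n (k - 1) + (n : ℚ) * f n k

theorem StirlingCycleRec.eq_of_zero {f g : ℕ → ℤ → ℚ} (hf : StirlingCycleRec f)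
    (hg : StirlingCycleRec g) (h0 : f 0 = g 0) : f = g := by
  funext n
  induction n with
  | zero => exact h0
  | succ n ih => funext k; rw [hf, hg, ih]

theorem stirCycle_of_neg (n : ℕ) {k : ℤ} (hk : k < 0) : stirCycle n k = 0 := by
  induction n generalizing k with
  | zero => simp only [stirCycle, ite_eq_right_iff, one_ne_zero]; omega
  | succ n ih => rw [stirCycle, ih (by omega), ih hk, mul_zero, add_zero]

def stirConv (c : ℕ → ℚ) (n : ℕ) (k : ℤ) : ℚ :=
  ∑ j ∈ Finset.Icc 1 k.toNat, c j * stirCycle n (k - j)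

section stirConv

variable (c : ℕ → ℚ)

theorem stirlingCycleRec_stirConv : StirlingCycleRec (stirConv c) := by
  intro n k
  have hsplit : stirConv c (n + 1) k
      = (∑ j ∈ Finset.Icc 1 k.toNat, c j * stirCycle n (k - 1 - j)) + n * stirConv c n k := by
    rw [stirConv, stirConv, Finset.mul_sum, ← Finset.sum_add_distrib]
    refine Finset.sum_congr rfl fun j _ => ?_
    rw [stirCycle, sub_right_comm]
    ring
  rw [hsplit]
  congr 1
  rw [stirConv]
  rcases le_or_gt k 0 with hk | hk
  · rw [show (k - 1).toNat = 0 by omega, show k.toNat = 0 by omega]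
  · rw [show k.toNat = (k - 1).toNat + 1 by omega, Finset.sum_Icc_succ_top (by omega),
      show k - 1 - ((k - 1).toNat + 1 : ℕ) = -1 by push_cast; omega,
      stirCycle_of_neg n (by norm_num), mul_zero, add_zero]

theorem stirConv_zero_of_nonpos {k : ℤ} (hk : k ≤ 0) : stirConv c 0 k = 0 := by
  rw [stirConv, show k.toNat = 0 by omega, Finset.Icc_eq_empty (by norm_num),
    Finset.sum_empty]

theorem stirConv_zero_natCast_add_one (j : ℕ) : stirConv c 0 ((j : ℤ) + 1) = c (j + 1) := by
  rw [stirConv, show ((j : ℤ) + 1).toNat = j + 1 by omega,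
    Finset.sum_eq_single_of_mem (j + 1) (by simp)]
  · simp [stirCycle]
  · intro i hi hne
    have : ((j : ℤ) + 1 - i ≠ 0) := by omega
    simp [stirCycle, this]

end stirConv

section superdiagonal

variable {S : ℕ → ℤ → ℚ} (hS : StirlingCycleRec S)
include hS

theorem StirlingCycleRec.superdiag_step (m d : ℕ) (K : ℤ) (c s : ℚ)
    (hlow : S (m + 1) (K - 1) = c + s * aArr d m)
    (hright : S (m + 2) K = c + s * aArr d (m + 1)) :
    S (m + 1) K = -s * aArr (d + 1) m := by
  have hm : (m : ℚ) + 1 ≠ 0 := by positivity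
  have hrec := hS (m + 1) K
  rw [hlow, hright] at hrec
  push_cast at hrec
  rw [aArr]
  field_simp
  linear_combination -hrec

theorem StirlingCycleRec.superdiag
    (hdiag : ∀ n : ℕ, 1 ≤ n → S n (n : ℤ) = ((n : ℚ) - 1) / n) (d m : ℕ) :
    S (m + 1) ((m : ℤ) + d + 2) = (-1) ^ d * aArr (d + 1) m := by
  induction d generalizing m with
  | zero =>
    have hdiag' (m : ℕ) : S (m + 1) ((m : ℤ) + 1) = 1 + (-1) * aArr 0 m := by
      have hm : (m : ℚ) + 1 ≠ 0 := by positivity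
      have := hdiag (m + 1) (by omega)
      push_cast at this
      rw [this, aArr]
      field_simp
      ring
    have := hS.superdiag_step m 0 ((m : ℤ) + 2) 1 (-1)
      (by rw [show (m : ℤ) + 2 - 1 = m + 1 by ring]; exact hdiag' m)
      (by rw [← hdiag' (m + 1)]; push_cast; ring_nf)
    simpa using this
  | succ d ih =>
    have := hS.superdiag_step m (d + 1) ((m : ℤ) + (d + 1 : ℕ) + 2) 0 ((-1) ^ d)
      (by rw [zero_add, ← ih m]; push_cast; ring_nf)
      (by rw [zero_add, ← ih (m + 1)]; push_cast; ring_nf)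
    rw [this, pow_succ]
    ring

theorem StirlingCycleRec.zero_natCast_add_one
    (hdiag : ∀ n : ℕ, 1 ≤ n → S n (n : ℤ) = ((n : ℚ) - 1) / n) (j : ℕ) :
    S 0 ((j : ℤ) + 1) = (-1) ^ j * omegaSeq (j + 1) := by
  have hrec := hS 0 ((j : ℤ) + 2)
  have hsup := hS.superdiag hdiag j 0
  rw [show (j : ℤ) + 2 - 1 = j + 1 by ring] at hrec
  push_cast at hrec hsup
  rw [show (0 : ℤ) + j + 2 = j + 2 by ring, hrec, zero_mul, add_zero] at hsup
  exact hsup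

end superdiagonal

theorem stmt17 (Sstar : ℕ → ℤ → ℚ)
    (hSrec : ∀ (n : ℕ) (k : ℤ), Sstar (n + 1) k = Sstar n (k - 1) + (n : ℚ) * Sstar n k)
    (hS0 : ∀ k : ℤ, k ≤ 0 → Sstar 0 k = 0)
    (hSdiag : ∀ n : ℕ, 1 ≤ n → Sstar n (n : ℤ) = ((n : ℚ) - 1) / n)
    (n : ℕ) (k : ℤ) :
    Sstar n k
      = ∑ j ∈ Finset.Icc 1 k.toNat,
          (-1 : ℚ) ^ (j - 1) * omegaSeq j * stirCycle n (k - j) := by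
  have hS : StirlingCycleRec Sstar := hSrec
  let c : ℕ → ℚ := fun j => (-1) ^ (j - 1) * omegaSeq j
  have hrow : Sstar 0 = stirConv c 0 := by
    funext k
    rcases le_or_gt k 0 with hk | hk
    · rw [hS0 k hk, stirConv_zero_of_nonpos c hk]
    · obtain ⟨j, rfl⟩ : ∃ j : ℕ, k = j + 1 := ⟨(k - 1).toNat, by omega⟩
      rw [hS.zero_natCast_add_one hSdiag, stirConv_zero_natCast_add_one]
      simp [c]
  rw [hS.eq_of_zero (stirlingCycleRec_stirConv c) hrow]
  rfl
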